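/- arXiv:1707.07581 — 3 statements merged into one kernel-verified Lean document; each statement's English description precedes it below -/
import Mathlib

section
/- If there exists a triangle-free graph on n vertices with chromatic number k, then there exists a triangle-free graph on 2n+1 vertices with chromatic number k+1. (Consequence of the Mycielski construction; in particular n(k+1) ≤ 2n(k)+1.) -/
/-!
Mycielski's construction: add a copy `v'` of every vertex `v`, adjacent to the neighbours of `v`,
and an apex adjacent to all copies. The copies form an independent set, so the apex lies in no
triangle, and a triangle through a copy `v'` would give one through `v`. A `k`-colouring of `G`
extends by a fresh colour on the apex; conversely, in a `(k + 1)`-colouring, recolouring each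
original vertex that has the apex colour by the colour of its copy gives a `k`-colouring of `G`.
-/

namespace SimpleGraph

variable {V : Type*} (G : SimpleGraph V)

/-- `some (.inl v)` is `v`, `some (.inr v)` its copy, `none` the apex. -/
def MycielskianAdj : Option (V ⊕ V) → Option (V ⊕ V) → Prop
  | some (.inl a), some (.inl b) => G.Adj a b
  | some (.inl a), some (.inr b) => G.Adj a b
  | some (.inr a), some (.inl b) => G.Adj a b
  | some (.inr _), none => True
  | none, some (.inr _) => True
  | _, _ => False

def mycielskian : SimpleGraph (Option (V ⊕ V)) where
  Adj := G.MycielskianAdj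
  symm := by
    constructor
    rintro (_ | a | a) (_ | b | b) h <;> simp_all [MycielskianAdj, G.adj_comm]
  loopless := by
    constructor
    rintro (_ | a | a) h <;> simp_all [MycielskianAdj]

variable {G}

theorem CliqueFree.mycielskian (hG : G.CliqueFree 3) : G.mycielskian.CliqueFree 3 := by
  classical
  have triangle (a b c : V) (hab : G.Adj a b) (hac : G.Adj a c) (hbc : G.Adj b c) : False :=
    hG {a, b, c} (is3Clique_triple_iff.2 ⟨hab, hac, hbc⟩)
  intro s hs
  obtain ⟨x, y, z, hxy, hxz, hyz, -⟩ := is3Clique_iff.1 hs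
  rcases x with _ | a | a <;> rcases y with _ | b | b <;> rcases z with _ | c | c <;>
    simp only [SimpleGraph.mycielskian, MycielskianAdj] at hxy hxz hyz <;>
    exact triangle a b c hxy hxz hyz

theorem Colorable.mycielskian {k : ℕ} (hG : G.Colorable k) : G.mycielskian.Colorable (k + 1) := by
  obtain ⟨c⟩ := hG
  refine ⟨Coloring.mk (fun
    | some (.inl a) | some (.inr a) => (c a).castSucc
    | none => Fin.last k) ?_⟩
  rintro (_ | a | a) (_ | b | b) hab <;>
    simp only [SimpleGraph.mycielskian, MycielskianAdj] at hab <;>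
    first
      | exact fun e => c.valid hab (Fin.castSucc_inj.mp e)
      | exact (Fin.castSucc_lt_last _).ne
      | exact (Fin.castSucc_lt_last _).ne'

theorem Colorable.of_mycielskian {k : ℕ} (h : G.mycielskian.Colorable (k + 1)) :
    G.Colorable k := by
  obtain ⟨C⟩ := h
  have hcopy (a : V) : C (some (.inr a)) ≠ C none :=
    C.valid (show G.mycielskian.Adj _ _ from trivial)
  let c : V → {x // x ≠ C none} := fun a =>
    if ha : C (some (.inl a)) = C none then ⟨_, hcopy a⟩ else ⟨_, ha⟩
  have hc {a b : V} (hab : G.Adj a b) : c a ≠ c b := by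
    have h1 : C (some (.inl a)) ≠ C (some (.inl b)) := C.valid hab
    have h2 : C (some (.inr a)) ≠ C (some (.inl b)) :=
      C.valid (show G.mycielskian.Adj _ _ from hab)
    have h3 : C (some (.inl a)) ≠ C (some (.inr b)) :=
      C.valid (show G.mycielskian.Adj _ _ from hab)
    simp only [c]
    split_ifs with ha hb hb <;> simp only [ne_eq, Subtype.mk.injEq]
    · exact fun _ => h1 (ha.trans hb.symm)
    · exact h2
    · exact h3
    · exact h1
  simpa [Fintype.card_subtype_compl] using (Coloring.mk c hc).colorable

theorem colorable_succ_mycielskian_iff {k : ℕ} :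
    G.mycielskian.Colorable (k + 1) ↔ G.Colorable k :=
  ⟨Colorable.of_mycielskian, Colorable.mycielskian⟩

theorem chromaticNumber_mycielskian : G.mycielskian.chromaticNumber = G.chromaticNumber + 1 := by
  refine WithTop.eq_of_forall_le_coe_iff fun m => ?_
  change _ ≤ (m : ℕ∞) ↔ _ ≤ (m : ℕ∞)
  cases m with
  | zero => simp
  | succ k =>
    rw [Nat.cast_succ, ENat.add_le_add_iff_right ENat.one_ne_top, ← Nat.cast_succ,
      chromaticNumber_le_iff_colorable, chromaticNumber_le_iff_colorable,
      colorable_succ_mycielskian_iff]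

end SimpleGraph

open SimpleGraph

/-- If there exists a triangle-free graph on `n` vertices with chromatic number `k`, then
there exists a triangle-free graph on `2 * n + 1` vertices with chromatic number `k + 1`
(a consequence of the Mycielski construction). -/
theorem exists_triangle_free_succ_chromatic_of_exists
    (n k : ℕ)
    (h : ∃ G : SimpleGraph (Fin n), G.CliqueFree 3 ∧ G.chromaticNumber = (k : ℕ∞)) :
    ∃ H : SimpleGraph (Fin (2 * n + 1)),
      H.CliqueFree 3 ∧ H.chromaticNumber = ((k + 1 : ℕ) : ℕ∞) := by
  obtain ⟨G, hG, hχ⟩ := h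
  let e : Option (Fin n ⊕ Fin n) ≃ Fin (2 * n + 1) :=
    Fintype.equivFinOfCardEq (by simp [two_mul])
  refine ⟨G.mycielskian.map e.toEmbedding, cliqueFree_map_iff.2 hG.mycielskian, ?_⟩
  refine (chromaticNumber_congr (Iso.map e _)).symm.trans ?_
  rw [chromaticNumber_mycielskian, hχ, Nat.cast_succ]
end

section
/- Let G be a maximal triangle-free graph on n vertices with chromatic number k and maximum degree d, let v be a vertex of degree d, and assume n ≥ d + 2. Then the induced subgraph G' of G on the vertices outside the closed neighbourhood of v (i.e., outside {v} ∪ N(v)) is a triangle-free graph on n − d − 1 vertices with maximum degree at most d − 1, and the chromatic number of G' equals k − 1 or k. -/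
/-- A graph is maximal triangle-free if it is triangle-free and inserting any edge between
two distinct non-adjacent vertices creates a triangle. -/
def MaximalTriangleFree {V : Type*} (G : SimpleGraph V) : Prop :=
  G.CliqueFree 3 ∧
    ∀ u w : V, u ≠ w → ¬ G.Adj u w → ¬ (G ⊔ SimpleGraph.edge u w).CliqueFree 3

/-! A vertex `u` outside `N[v]` is not adjacent to `v`, so by maximality `u` and `v` have a common
neighbour, which lies in `N(v)`: deleting `N[v]` costs `u` at least one neighbour. Since `N(v)` is
independent and `v` has no neighbour outside `N[v]`, a colouring of `G'` extends to `G` by giving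
`v` an old colour and all of `N(v)` one new colour, whence `χ(G) - 1 ≤ χ(G') ≤ χ(G)`. -/

namespace SimpleGraph

variable {V : Type*} {G : SimpleGraph V}

theorem ncard_neighborSet_eq_degree [Fintype V] [DecidableRel G.Adj] (v : V) :
    (G.neighborSet v).ncard = G.degree v := by
  rw [← Nat.card_coe_set_eq, Nat.card_eq_fintype_card, card_neighborSet_eq_degree]

theorem ncard_compl_insert_neighborSet [Fintype V] [DecidableRel G.Adj] (v : V) :
    {u | u ∉ insert v (G.neighborSet v)}.ncard = Fintype.card V - G.degree v - 1 := by
  rw [← Set.compl_def, Set.ncard_compl, Nat.card_eq_fintype_card,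
    Set.ncard_insert_of_notMem G.notMem_neighborSet_self, ncard_neighborSet_eq_degree]
  omega

theorem ncard_neighborSet_induce_lt_degree [Fintype V] [DecidableRel G.Adj] {s : Set V} (u : s)
    {w : V} (hw : w ∉ s) (hadj : G.Adj u w) :
    ((G.induce s).neighborSet u).ncard < G.degree u := by
  rw [← ncard_neighborSet_eq_degree, ← Set.ncard_image_of_injective _ Subtype.val_injective]
  refine Set.ncard_lt_ncard (Set.ssubset_iff_exists.2 ⟨?_, w, hadj, ?_⟩)
  · rintro _ ⟨x, hx, rfl⟩
    exact hx
  · rintro ⟨x, -, rfl⟩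
    exact hw x.2

theorem colorable_succ_of_colorable_induce_compl_closedNeighborhood {v : V} {m : ℕ}
    (hv : G.IsIndepSet (G.neighborSet v)) (hm : m ≠ 0)
    (hc : (G.induce {u | u ∉ insert v (G.neighborSet v)}).Colorable m) : G.Colorable (m + 1) := by
  classical
  obtain ⟨C⟩ := hc
  let f : V → Option (Fin m) := fun u =>
    if hu : u = v then some ⟨0, Nat.pos_of_ne_zero hm⟩
    else if hvu : G.Adj v u then none
    else some (C ⟨u, by simp [hu, hvu]⟩)
  have hf : ∀ {x y : V}, G.Adj x y → f x ≠ f y := by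
    intro x y hxy
    have hyx := hxy.symm
    have hind : ¬ (G.Adj v x ∧ G.Adj v y) := fun h => hv h.1 h.2 hxy.ne hxy
    by_cases hx : x = v <;> by_cases hy : y = v <;> by_cases hvx : G.Adj v x <;>
      by_cases hvy : G.Adj v y <;> simp_all [f, C.valid]
  simpa using (Coloring.mk f hf).colorable

theorem chromaticNumber_induce_compl_closedNeighborhood_eq_or [Finite V] (hG : G.CliqueFree 3)
    {v : V} {k : ℕ} (hχ : G.chromaticNumber = k)
    (hne : {u | u ∉ insert v (G.neighborSet v)}.Nonempty) :
    (G.induce {u | u ∉ insert v (G.neighborSet v)}).chromaticNumber = (k - 1 : ℕ) ∨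
      (G.induce {u | u ∉ insert v (G.neighborSet v)}).chromaticNumber = k := by
  set S := {u | u ∉ insert v (G.neighborSet v)}
  obtain ⟨m, hm⟩ : ∃ m : ℕ, (m : ℕ∞) = (G.induce S).chromaticNumber :=
    ENat.ne_top_iff_exists.1 <| chromaticNumber_ne_top_iff_exists.2
      ⟨_, colorable_chromaticNumber_of_fintype _⟩
  have hmk : m ≤ k := by
    have := chromaticNumber_mono_of_hom (Embedding.induce (G := G) S).toHom
    rwa [← hm, hχ, Nat.cast_le] at this
  have hm0 : m ≠ 0 := by
    rw [← Nat.cast_ne_zero (R := ℕ∞), hm, Ne, chromaticNumber_eq_zero_iff, not_isEmpty_iff]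
    exact hne.to_subtype
  have hkm : k ≤ m + 1 := by
    have := (colorable_succ_of_colorable_induce_compl_closedNeighborhood
      (G.isIndepSet_neighborSet_of_triangleFree hG v) hm0
      (chromaticNumber_le_iff_colorable.1 hm.ge)).chromaticNumber_le
    rwa [hχ, Nat.cast_le] at this
  rw [← hm]
  rcases (by omega : m = k - 1 ∨ m = k) with rfl | rfl
  exacts [Or.inl rfl, Or.inr rfl]

end SimpleGraph

namespace MaximalTriangleFree

open SimpleGraph

variable {V : Type*} {G : SimpleGraph V}

theorem exists_adj_adj (hG : MaximalTriangleFree G) {u w : V} (hne : u ≠ w)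
    (hnadj : ¬ G.Adj u w) : ∃ x, G.Adj u x ∧ G.Adj w x := by
  classical
  obtain ⟨t, ht⟩ := not_forall_not.1 (hG.2 u w hne hnadj)
  have hu := hG.1.mem_of_sup_edge_isNClique ht
  have hw := hG.1.mem_of_sup_edge_isNClique (edge_comm .. ▸ ht)
  obtain ⟨x, hxt, hxuw⟩ : ∃ x ∈ t, x ∉ ({u, w} : Finset V) :=
    Finset.exists_mem_notMem_of_card_lt_card <| by
      rw [ht.card_eq]
      exact Finset.card_le_two.trans_lt (by norm_num)
  simp only [Finset.mem_insert, Finset.mem_singleton, not_or] at hxuw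
  have hxu := ht.1 hu hxt (Ne.symm hxuw.1)
  have hxw := ht.1 hw hxt (Ne.symm hxuw.2)
  simp only [sup_adj, edge_adj] at hxu hxw
  exact ⟨x, by grind, by grind⟩

theorem ncard_neighborSet_induce_compl_closedNeighborhood_lt_degree
    [Fintype V] [DecidableRel G.Adj] (hG : MaximalTriangleFree G) {v : V}
    (u : {u | u ∉ insert v (G.neighborSet v)}) :
    ((G.induce {u | u ∉ insert v (G.neighborSet v)}).neighborSet u).ncard < G.degree u := by
  obtain ⟨huv, hvu⟩ : u.1 ≠ v ∧ ¬ G.Adj v u := not_or.1 u.2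
  obtain ⟨w, huw, hvw⟩ := hG.exists_adj_adj huv fun h => hvu h.symm
  exact ncard_neighborSet_induce_lt_degree u (fun hw => hw (Or.inr hvw)) huw

end MaximalTriangleFree

open SimpleGraph in
theorem induce_compl_closedNeighborhood_of_maximalTriangleFree_general
    {V : Type*} [Fintype V] (G : SimpleGraph V) [DecidableRel G.Adj]
    (n k d : ℕ)
    (hmtf : MaximalTriangleFree G)
    (hcard : Fintype.card V = n)
    (hchi : G.chromaticNumber = (k : ℕ∞))
    (hmax : G.maxDegree = d)
    (v : V) (hv : G.degree v = d)
    (hn : d + 2 ≤ n) :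
    (G.induce {u : V | u ∉ insert v (G.neighborSet v)}).CliqueFree 3 ∧
    ({u : V | u ∉ insert v (G.neighborSet v)}).ncard = n - d - 1 ∧
    (∀ u : ({u : V | u ∉ insert v (G.neighborSet v)} : Set V),
      ((G.induce {u : V | u ∉ insert v (G.neighborSet v)}).neighborSet u).ncard ≤ d - 1) ∧
    ((G.induce {u : V | u ∉ insert v (G.neighborSet v)}).chromaticNumber = ((k - 1 : ℕ) : ℕ∞) ∨
      (G.induce {u : V | u ∉ insert v (G.neighborSet v)}).chromaticNumber = (k : ℕ∞)) := by
  set S := {u : V | u ∉ insert v (G.neighborSet v)}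
  have hScard : S.ncard = n - d - 1 := by rw [ncard_compl_insert_neighborSet, hcard, hv]
  refine ⟨hmtf.1.comap (Embedding.induce S).isContained, hScard, fun u => ?_,
    chromaticNumber_induce_compl_closedNeighborhood_eq_or hmtf.1 hchi
      (Set.nonempty_of_ncard_ne_zero (s := S) (by omega))⟩
  have : ((G.induce S).neighborSet u).ncard < G.degree u :=
    hmtf.ncard_neighborSet_induce_compl_closedNeighborhood_lt_degree u
  have := G.degree_le_maxDegree u
  omega

/-- Let `G` be a maximal triangle-free graph on `n` vertices with chromatic number `k` and
maximum degree `d`, let `v` be a vertex of degree `d`, and assume `n ≥ d + 2`. Then the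
subgraph `G'` induced on the vertices outside the closed neighbourhood of `v` is a
triangle-free graph on `n - d - 1` vertices with maximum degree at most `d - 1`, and the
chromatic number of `G'` equals `k - 1` or `k`. -/
theorem induce_compl_closedNeighborhood_of_maximalTriangleFree
    {V : Type*} [Fintype V] [DecidableEq V] (G : SimpleGraph V) [DecidableRel G.Adj]
    (n k d : ℕ)
    (hmtf : MaximalTriangleFree G)
    (hcard : Fintype.card V = n)
    (hchi : G.chromaticNumber = (k : ℕ∞))
    (hmax : G.maxDegree = d)
    (v : V) (hv : G.degree v = d)
    (hn : d + 2 ≤ n) :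
    (G.induce {u : V | u ∉ insert v (G.neighborSet v)}).CliqueFree 3 ∧
    ({u : V | u ∉ insert v (G.neighborSet v)}).ncard = n - d - 1 ∧
    (∀ u : ({u : V | u ∉ insert v (G.neighborSet v)} : Set V),
      ((G.induce {u : V | u ∉ insert v (G.neighborSet v)}).neighborSet u).ncard ≤ d - 1) ∧
    ((G.induce {u : V | u ∉ insert v (G.neighborSet v)}).chromaticNumber = ((k - 1 : ℕ) : ℕ∞) ∨
      (G.induce {u : V | u ∉ insert v (G.neighborSet v)}).chromaticNumber = (k : ℕ∞)) :=
  induce_compl_closedNeighborhood_of_maximalTriangleFree_general G n k d hmtf hcard hchi hmax v hv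
    hn
end

section
/- There exists a graph on 22 vertices of girth exactly 5 and maximum degree 7 that is 4-critical, i.e., its chromatic number is 4 and every proper subgraph (obtained by deleting at least one vertex or at least one edge) has chromatic number at most 3. -/
/-!
The graph is given by its 42 edges. A 5-cycle together with the absence of triangles and of
4-cycles pins its girth to 5, and its degrees are read off from its adjacency lists. Every
colouring statement is decided by one backtracking search, proved to succeed exactly when a
proper colouring exists: it finds no 3-colouring of the graph, but a 4-colouring, and a
3-colouring of the graph minus any one edge. As no vertex is isolated, every proper subgraph
(on a subset of the vertices) maps into the graph minus some edge, hence is 3-colourable.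
-/

namespace SimpleGraph

variable {V : Type*} {G : SimpleGraph V}

section Critical

variable {s : Set V} {H : SimpleGraph s}

theorem exists_adj_forall_not_adj_of_le_induce (hδ : ∀ v, ∃ w, G.Adj v w)
    (hle : H ≤ G.induce s) (hne : s ≠ Set.univ ∨ H ≠ G.induce s) :
    ∃ a b, G.Adj a b ∧ ∀ (ha : a ∈ s) (hb : b ∈ s), ¬ H.Adj ⟨a, ha⟩ ⟨b, hb⟩ := by
  rcases hne with hs | hH
  · obtain ⟨v, hv⟩ := (Set.ne_univ_iff_exists_notMem s).mp hs
    obtain ⟨w, hvw⟩ := hδ v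
    exact ⟨v, w, hvw, fun hv' _ => absurd hv' hv⟩
  · obtain ⟨x, y, hxy, hnot⟩ : ∃ x y, (G.induce s).Adj x y ∧ ¬ H.Adj x y := by
      by_contra! h
      exact hH (le_antisymm hle fun x y => h x y)
    exact ⟨x, y, hxy, fun _ _ => hnot⟩

theorem Colorable.of_le_induce_of_forall_not_adj {a b : V} {n : ℕ} (hle : H ≤ G.induce s)
    (hab : ∀ (ha : a ∈ s) (hb : b ∈ s), ¬ H.Adj ⟨a, ha⟩ ⟨b, hb⟩)
    (hc : (G.deleteEdges {s(a, b)}).Colorable n) : H.Colorable n :=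
  hc.of_hom
    { toFun := Subtype.val
      map_rel' := fun {x y} hxy => by
        refine deleteEdges_adj.mpr ⟨hle hxy, fun h => ?_⟩
        rcases Sym2.eq_iff.mp h with ⟨rfl, rfl⟩ | ⟨rfl, rfl⟩
        · exact hab x.2 y.2 hxy
        · exact hab y.2 x.2 hxy.symm }

theorem chromaticNumber_le_of_le_induce {n : ℕ} (hδ : ∀ v, ∃ w, G.Adj v w)
    (hcrit : ∀ a b, G.Adj a b → (G.deleteEdges {s(a, b)}).Colorable n)
    (hle : H ≤ G.induce s) (hne : s ≠ Set.univ ∨ H ≠ G.induce s) : H.chromaticNumber ≤ n := by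
  obtain ⟨a, b, hab, hH⟩ := exists_adj_forall_not_adj_of_le_induce hδ hle hne
  exact (Colorable.of_le_induce_of_forall_not_adj hle hH (hcrit a b hab)).chromaticNumber_le

end Critical

theorem five_le_egirth (h3 : ∀ a b c, G.Adj a b → G.Adj b c → ¬ G.Adj c a)
    (h4 : ∀ a b c d, G.Adj a b → G.Adj b c → G.Adj c d → G.Adj d a → a = c ∨ b = d) :
    5 ≤ G.egirth := by
  rw [le_egirth]
  intro a w hw
  have hlen := hw.three_le_length
  rcases w with _ | ⟨hab, _ | ⟨hbc, _ | ⟨hcd, _ | ⟨hde, p⟩⟩⟩⟩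
  · simp at hlen
  · simp at hlen
  · simp at hlen
  · exact absurd hcd (h3 _ _ _ hab hbc)
  rcases p with _ | ⟨-, p⟩
  · have hnd := hw.support_nodup
    rcases h4 _ _ _ _ hab hbc hcd hde with rfl | rfl <;> simp at hnd
  · simp only [Walk.length_cons]
    norm_cast
    omega

section ColoringSearch

variable [DecidableEq V] {α : Type*} {N : V → List V}

def IsNeighborList (G : SimpleGraph V) (N : V → List V) : Prop :=
  ∀ u v, u ∈ N v ↔ G.Adj u v

theorem IsNeighborList.deleteEdges (hN : G.IsNeighborList N) (e : Sym2 V) :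
    (G.deleteEdges {e}).IsNeighborList fun v => (N v).filter fun u => s(u, v) ≠ e := by
  intro u v
  simp [hN u v]

theorem IsNeighborList.ncard_neighborSet (hN : G.IsNeighborList N) {v : V} (hv : (N v).Nodup) :
    (G.neighborSet v).ncard = (N v).length := by
  have : G.neighborSet v = ((N v).toFinset : Set V) := by
    ext u
    simp [hN u v, G.adj_comm]
  rw [this, Set.ncard_coe_finset, List.toFinset_card_of_nodup hv]

def IsProperPartialColoring (G : SimpleGraph V) (f : V → Option α) : Prop :=
  ∀ ⦃u v⦄, G.Adj u v → ∀ c, f u = some c → f v ≠ some c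

theorem IsProperPartialColoring.update {f : V → Option α} (hf : G.IsProperPartialColoring f)
    {v : V} {c : α} (hc : ∀ u, G.Adj u v → f u ≠ some c) :
    G.IsProperPartialColoring (Function.update f v (some c)) := by
  intro x y hxy c' hx hy
  by_cases hxv : x = v <;> by_cases hyv : y = v
  · exact hxy.ne (hxv.trans hyv.symm)
  · subst hxv
    rw [Function.update_self, Option.some_inj] at hx
    rw [Function.update_of_ne hyv, ← hx] at hy
    exact hc y hxy.symm hy
  · subst hyv
    rw [Function.update_self, Option.some_inj] at hy
    rw [Function.update_of_ne hxv, ← hy] at hx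
    exact hc x hxy hx
  · rw [Function.update_of_ne hxv] at hx
    rw [Function.update_of_ne hyv] at hy
    exact hf hxy c' hx hy

/-- Backtracking search for a colouring with colours in `Fin k` that extends `f` to the
vertices `vs`, colouring them in order; `N v` is meant to list the neighbours of `v`. -/
def extendColoring {k : ℕ} (N : V → List V) :
    List V → (V → Option (Fin k)) → Option (V → Option (Fin k))
  | [], f => some f
  | v :: vs, f => (List.finRange k).findSome? fun c =>
      if (N v).all (fun u => f u != some c) then extendColoring N vs (Function.update f v (some c))
      else none

theorem extendColoring_eq_some {k : ℕ} (hN : ∀ u v, G.Adj u v → u ∈ N v) :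
    ∀ {vs : List V} {f g : V → Option (Fin k)}, G.IsProperPartialColoring f →
      extendColoring N vs f = some g →
      G.IsProperPartialColoring g ∧ ∀ v, v ∈ vs ∨ (f v).isSome → (g v).isSome
  | [], f, g, hf, h => by
    cases h
    exact ⟨hf, fun v hv => hv.resolve_left List.not_mem_nil⟩
  | v :: vs, f, g, hf, h => by
    obtain ⟨c, -, hc⟩ := List.exists_of_findSome?_eq_some h
    split_ifs at hc with hfree
    have hfree' : ∀ u, G.Adj u v → f u ≠ some c := fun u hu => by
      simpa using List.all_eq_true.mp hfree u (hN u v hu)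
    obtain ⟨hg, hcov⟩ := extendColoring_eq_some hN (hf.update hfree') hc
    refine ⟨hg, fun w hw => hcov w ?_⟩
    by_cases hwv : w = v
    · subst hwv
      simp
    · rcases hw with hw | hw
      · exact .inl ((List.mem_cons.mp hw).resolve_left hwv)
      · exact .inr (by rwa [Function.update_of_ne hwv])

theorem isSome_extendColoring {k : ℕ} (hN : ∀ u v, u ∈ N v → G.Adj u v)
    (C : G.Coloring (Fin k)) :
    ∀ {vs : List V} {f : V → Option (Fin k)}, (∀ u c, f u = some c → C u = c) →
      (extendColoring N vs f).isSome
  | [], _, _ => rfl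
  | v :: vs, f, hf => by
    rw [extendColoring, List.findSome?_isSome_iff]
    have hfree : (N v).all (fun u => f u != some (C v)) := by
      rw [List.all_eq_true]
      intro u hu
      simpa using fun h => C.valid (hN u v hu) (hf u _ h)
    refine ⟨C v, List.mem_finRange _, ?_⟩
    rw [if_pos hfree]
    refine isSome_extendColoring hN C fun u c hu => ?_
    by_cases huv : u = v
    · subst huv
      simpa using hu
    · rw [Function.update_of_ne huv] at hu
      exact hf u c hu

theorem IsNeighborList.colorable_iff {k : ℕ} (hN : G.IsNeighborList N) {vs : List V}
    (hvs : ∀ v, v ∈ vs) :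
    G.Colorable k ↔ (extendColoring N vs (fun _ => none : V → Option (Fin k))).isSome := by
  constructor
  · rintro ⟨C⟩
    exact isSome_extendColoring (fun u v => (hN u v).mp) C (by simp)
  · intro h
    obtain ⟨g, hg⟩ := Option.isSome_iff_exists.mp h
    obtain ⟨hproper, hcov⟩ :=
      extendColoring_eq_some (fun u v => (hN u v).mpr) (by simp [IsProperPartialColoring]) hg
    have hsome : ∀ v, (g v).isSome := fun v => hcov v (.inl (hvs v))
    refine ⟨Coloring.mk (fun v => (g v).get (hsome v)) fun {u v} huv heq => ?_⟩
    exact hproper huv _ (Option.some_get _).symm (by rw [heq, Option.some_get])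

end ColoringSearch

end SimpleGraph

namespace FourCriticalGraph

open SimpleGraph

def edgeList : List (Fin 22 × Fin 22) :=
  [(0, 1), (0, 4), (0, 13), (0, 16), (1, 2), (1, 7), (1, 11), (2, 3), (2, 6), (2, 17),
   (3, 4), (3, 8), (3, 19), (4, 5), (5, 6), (5, 7), (5, 14), (5, 15), (5, 20), (5, 21),
   (6, 9), (7, 10), (8, 9), (8, 10), (8, 20), (9, 11), (9, 13), (10, 12), (10, 17),
   (11, 12), (11, 15), (12, 14), (12, 18), (13, 14), (13, 19), (15, 16), (16, 17),
   (16, 18), (17, 21), (18, 19), (18, 20), (19, 21)]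

def graph : SimpleGraph (Fin 22) :=
  fromRel fun u v => (u, v) ∈ edgeList

instance : DecidableRel graph.Adj :=
  inferInstanceAs (DecidableRel (fromRel _).Adj)

def neighborList (v : Fin 22) : List (Fin 22) :=
  edgeList.filterMap fun p => if p.1 = v then some p.2 else if p.2 = v then some p.1 else none

theorem isNeighborList_neighborList : graph.IsNeighborList neighborList := by
  unfold IsNeighborList
  decide +kernel

theorem egirth_le_five : graph.egirth ≤ 5 := by
  let c : graph.Walk 0 0 :=
    .cons (show graph.Adj 0 1 by decide) <| .cons (show graph.Adj 1 2 by decide) <|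
      .cons (show graph.Adj 2 3 by decide) <| .cons (show graph.Adj 3 4 by decide) <|
      .cons (show graph.Adj 4 0 by decide) .nil
  have hc : c.IsCycle := by
    rw [Walk.cons_isCycle_iff, Walk.isPath_def]
    decide
  exact egirth_le_length hc

theorem five_le_egirth_graph : 5 ≤ graph.egirth := by
  have hN (u v : Fin 22) (h : graph.Adj v u) : u ∈ neighborList v :=
    (isNeighborList_neighborList u v).mpr h.symm
  have h3 : ∀ a, ∀ b ∈ neighborList a, ∀ c ∈ neighborList b, a ∉ neighborList c := by
    decide +kernel
  have h4 : ∀ a, ∀ b ∈ neighborList a, ∀ c ∈ neighborList b, ∀ d ∈ neighborList c,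
      a ∈ neighborList d → a = c ∨ b = d := by
    decide +kernel
  exact five_le_egirth (fun a b c hab hbc hca => h3 a b (hN _ _ hab) c (hN _ _ hbc) (hN _ _ hca))
    fun a b c d hab hbc hcd hda => h4 a b (hN _ _ hab) c (hN _ _ hbc) d (hN _ _ hcd) (hN _ _ hda)

theorem neighborList_nodup : ∀ v, (neighborList v).Nodup := by
  decide +kernel

theorem ncard_neighborSet_le (v : Fin 22) : (graph.neighborSet v).ncard ≤ 7 := by
  rw [isNeighborList_neighborList.ncard_neighborSet (neighborList_nodup v)]
  revert v
  decide +kernel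

theorem ncard_neighborSet_five : (graph.neighborSet 5).ncard = 7 := by
  rw [isNeighborList_neighborList.ncard_neighborSet (neighborList_nodup 5)]
  decide +kernel

theorem not_colorable_three : ¬ graph.Colorable 3 := by
  rw [isNeighborList_neighborList.colorable_iff List.mem_finRange]
  decide +kernel

theorem colorable_four : graph.Colorable 4 := by
  rw [isNeighborList_neighborList.colorable_iff List.mem_finRange]
  decide +kernel

theorem colorable_deleteEdges (a b : Fin 22) (hab : graph.Adj a b) :
    (graph.deleteEdges {s(a, b)}).Colorable 3 := by
  have hsearch : ∀ p ∈ edgeList,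
      (extendColoring (fun v => (neighborList v).filter fun u => s(u, v) ≠ s(p.1, p.2))
        (List.finRange 22) (fun _ => none : Fin 22 → Option (Fin 3))).isSome := by
    decide +kernel
  have hN := isNeighborList_neighborList.deleteEdges
  obtain ⟨-, hp | hp⟩ := (fromRel_adj _ a b).mp hab
  · rw [(hN _).colorable_iff List.mem_finRange]
    exact hsearch _ hp
  · rw [Sym2.eq_swap, (hN _).colorable_iff List.mem_finRange]
    exact hsearch _ hp

theorem exists_adj : ∀ v, ∃ w, graph.Adj v w := by
  decide +kernel

end FourCriticalGraph

/-- There exists a graph on 22 vertices of girth exactly 5 and maximum degree 7 that is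
4-critical: its chromatic number is 4 and every proper subgraph (obtained by deleting at
least one vertex or at least one edge) has chromatic number at most 3. Degrees are
expressed via the cardinality of neighbour sets. -/
theorem exists_four_critical_girth_five_maxDegree_seven_on_22_vertices :
    ∃ G : SimpleGraph (Fin 22),
      G.egirth = 5 ∧
      (∀ v, (G.neighborSet v).ncard ≤ 7) ∧ (∃ v, (G.neighborSet v).ncard = 7) ∧
      G.chromaticNumber = 4 ∧
      ∀ (s : Set (Fin 22)) (H : SimpleGraph s), H ≤ G.induce s →
        (s ≠ Set.univ ∨ H ≠ G.induce s) → H.chromaticNumber ≤ 3 := by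
  refine ⟨FourCriticalGraph.graph, ?_, FourCriticalGraph.ncard_neighborSet_le,
    ⟨5, FourCriticalGraph.ncard_neighborSet_five⟩, ?_, ?_⟩
  · exact le_antisymm FourCriticalGraph.egirth_le_five FourCriticalGraph.five_le_egirth_graph
  · exact SimpleGraph.chromaticNumber_eq_iff_colorable_not_colorable.mpr
      ⟨FourCriticalGraph.colorable_four, FourCriticalGraph.not_colorable_three⟩
  · intro s H hle hne
    exact SimpleGraph.chromaticNumber_le_of_le_induce FourCriticalGraph.exists_adj
      FourCriticalGraph.colorable_deleteEdges hle hne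
end
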